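/- arXiv:2507.08143 — 2 statements merged into one kernel-verified Lean document; each statement's English description precedes it below -/
import Mathlib

section
/- Let K ∈ ℝ^{N×d}, let ε, δ ∈ (0,1), and let Φ ∈ ℝ^{d×k} be a random matrix whose entries are drawn i.i.d. from the Gaussian distribution N(0, 1/k). Let ℓ_i denote the leverage scores of K and let ℓ̃_i denote the leverage scores of the sketched matrix KΦ. If k ≥ 12·ε^{-2}·(rank(K)·log(42/ε) + log(2/δ)), then with probability at least 1 − δ, for every i ∈ {1,…,N}: κ(K)^{-1} · ((1−ε)/(1+ε)) · ℓ_i ≤ ℓ̃_i ≤ κ(K) · ((1+ε)/(1−ε)) · ℓ_i, where κ(K) = σ_max²/σ_min² is the ratio of the largest to the smallest nonzero squared singular value of K. -/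
open MeasureTheory ProbabilityTheory Matrix

/-- A compact singular value decomposition of `K`: `K = U * diagonal σ * Vᵀ` where `U` and `V`
have orthonormal columns and the singular values `σ j` are positive. -/
def IsCompactSVD {N d r : ℕ} (K : Matrix (Fin N) (Fin d) ℝ)
    (U : Matrix (Fin N) (Fin r) ℝ) (σ : Fin r → ℝ) (V : Matrix (Fin d) (Fin r) ℝ) : Prop :=
  K = U * Matrix.diagonal σ * Vᵀ ∧ Uᵀ * U = 1 ∧ Vᵀ * V = 1 ∧ ∀ j, 0 < σ j

/-- The (squared) condition number `κ = σ_max² / σ_min²` associated with a family of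
singular values `σ`. -/
noncomputable def condNumSq {r : ℕ} (σ : Fin r → ℝ) : ℝ :=
  sSup (Set.range fun j => σ j ^ 2) / sInf (Set.range fun j => σ j ^ 2)

/-!
Almost surely `Vᵀ Φ` has full row rank `r`: the determinant of its Gram matrix is a polynomial in
the entries of `Φ`, nonzero because `r ≤ k`, and the zero set of a nonzero polynomial is null for
a product of atomless measures. Then `K Φ` has the same column space as `K`, and leverage scores
depend only on the column space (they are the diagonal of the orthogonal projection `U Uᵀ`), so
`ℓ̃ = ℓ` exactly. The claimed bounds follow from `1 ≤ κ` and `(1 - ε)/(1 + ε) ≤ 1 ≤ (1 + ε)/(1 - ε)`.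
-/

namespace MvPolynomial

theorem ae_pi_eval_ne_zero_fin : ∀ {n : ℕ} (μ : Fin n → Measure ℝ) [∀ i, SigmaFinite (μ i)]
    [∀ i, NullSingletonClass (μ i)] {p : MvPolynomial (Fin n) ℝ}, p ≠ 0 →
    ∀ᵐ x ∂Measure.pi μ, eval x p ≠ 0
  | 0, μ, _, _, p, hp => by
    obtain ⟨a, rfl⟩ := C_surjective (Fin 0) p
    exact .of_forall fun x => by simpa using hp
  | n + 1, μ, _, _, p, hp => by
    set q := finSuccEquiv ℝ n p
    have hq : q.leadingCoeff ≠ 0 := by simpa [q] using hp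
    have hmeas : MeasurableSet {z : ℝ × (Fin n → ℝ) | eval (Fin.cons z.1 z.2) p ≠ 0} :=
      (measurableSet_singleton 0).compl.preimage
        ((continuous_eval p).measurable.comp (by fun_prop))
    have hcons (z : ℝ × (Fin n → ℝ)) :
        (MeasurableEquiv.piFinSuccAbove (fun _ => ℝ) 0).symm z = Fin.cons z.1 z.2 := by
      simp [Fin.consEquiv]
    rw [← (measurePreserving_piFinSuccAbove μ 0).symm.map_eq,
      (MeasurableEquiv.piFinSuccAbove _ 0).symm.measurableEmbedding.ae_map_iff]
    simp only [hcons]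
    rw [Measure.ae_prod_iff_ae_ae hmeas, Measure.ae_ae_comm hmeas]
    filter_upwards [ae_pi_eval_ne_zero_fin _ hq] with y hy
    -- off a null set of `y`, the slice `a ↦ p (a, y)` is a nonzero polynomial: finitely many roots
    have hy' : q.map (eval y) ≠ 0 := fun h => hy <| by
      simpa [Polynomial.coeff_map] using congrArg (Polynomial.coeff · q.natDegree) h
    refine measure_mono_null (fun a ha => ?_)
      ((Polynomial.finite_setOfPred_isRoot hy').measure_zero _)
    simpa [eval_eq_eval_mv_eval', q] using ha

theorem ae_pi_eval_ne_zero {ι : Type*} [Fintype ι] (μ : ι → Measure ℝ) [∀ i, SigmaFinite (μ i)]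
    [∀ i, NullSingletonClass (μ i)] {p : MvPolynomial ι ℝ} (hp : p ≠ 0) :
    ∀ᵐ x ∂Measure.pi μ, eval x p ≠ 0 := by
  set e := (Fintype.equivFin ι).symm
  have hp' : rename e.symm p ≠ 0 := (map_ne_zero_iff _ (rename_injective _ e.symm.injective)).2 hp
  rw [← (measurePreserving_piCongrLeft μ e).map_eq,
    (MeasurableEquiv.piCongrLeft _ e).measurableEmbedding.ae_map_iff]
  filter_upwards [ae_pi_eval_ne_zero_fin (fun j => μ (e j)) hp'] with y hy
  rw [eval_rename] at hy
  convert hy using 3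
  funext i
  obtain ⟨j, rfl⟩ := e.surjective i
  simp [MeasurableEquiv.piCongrLeft_apply_apply]

end MvPolynomial

theorem ProbabilityTheory.iIndepFun.ae_eval_ne_zero {Ω ι : Type*} [MeasurableSpace Ω]
    {μ : Measure Ω} [Fintype ι] {X : ι → Ω → ℝ} (hX : iIndepFun X μ)
    (hmeas : ∀ i, AEMeasurable (X i) μ) [∀ i, NullSingletonClass (μ.map (X i))]
    {p : MvPolynomial ι ℝ} (hp : p ≠ 0) :
    ∀ᵐ ω ∂μ, MvPolynomial.eval (fun i => X i ω) p ≠ 0 := by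
  have := hX.isProbabilityMeasure
  refine ae_of_ae_map (p := fun x => MvPolynomial.eval x p ≠ 0)
    (aemeasurable_pi_lambda _ hmeas) ?_
  rw [hX.map_fun_eq_pi_map hmeas]
  exact MvPolynomial.ae_pi_eval_ne_zero _ hp

namespace Matrix

variable {m n l R : Type*} [Fintype n] [Fintype l] [CommRing R]

theorem range_mulVecLin_mul_of_surjective {A : Matrix m n R} {B : Matrix n l R}
    (hB : Function.Surjective B.mulVec) :
    LinearMap.range (A * B).mulVecLin = LinearMap.range A.mulVecLin := by
  rw [mulVecLin_mul]
  exact LinearMap.range_comp_of_range_eq_top _ (LinearMap.range_eq_top.2 hB)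

theorem mulVec_surjective_of_det_mul_transpose_ne_zero [Fintype m] [DecidableEq m] {𝕜 : Type*}
    [Field 𝕜] {A : Matrix m n 𝕜} (h : (A * Aᵀ).det ≠ 0) : Function.Surjective A.mulVec :=
  mulVec_surjective_iff_exists_right_inverse.2
    ⟨Aᵀ * (A * Aᵀ)⁻¹, by rw [← Matrix.mul_assoc, mul_nonsing_inv _ (isUnit_iff_ne_zero.2 h)]⟩

theorem mul_transpose_mul_of_range_le [Fintype m] [DecidableEq n] {A : Matrix m n R}
    {B : Matrix m l R} (hA : Aᵀ * A = 1)
    (h : LinearMap.range B.mulVecLin ≤ LinearMap.range A.mulVecLin) : A * Aᵀ * B = B := by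
  refine mulVec_injective (funext fun x => ?_)
  obtain ⟨w, hw⟩ := h ⟨x, rfl⟩
  change A *ᵥ w = B *ᵥ x at hw
  rw [← hw, ← mulVec_mulVec, ← mulVec_mulVec, ← hw, mulVec_mulVec (M := Aᵀ), hA, one_mulVec]

/-- Both sides are the orthogonal projection onto the common column space. -/
theorem mul_transpose_eq_of_range_eq [Fintype m] [DecidableEq n] [DecidableEq l]
    {A : Matrix m n R} {B : Matrix m l R} (hA : Aᵀ * A = 1) (hB : Bᵀ * B = 1)
    (h : LinearMap.range A.mulVecLin = LinearMap.range B.mulVecLin) : A * Aᵀ = B * Bᵀ := by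
  have hAB : A * Aᵀ * (B * Bᵀ) = B * Bᵀ := by
    rw [← Matrix.mul_assoc, mul_transpose_mul_of_range_le hA h.ge]
  have hBA : B * Bᵀ * (A * Aᵀ) = A * Aᵀ := by
    rw [← Matrix.mul_assoc, mul_transpose_mul_of_range_le hB h.le]
  calc A * Aᵀ = (B * Bᵀ * (A * Aᵀ))ᵀ := by rw [hBA, transpose_mul, transpose_transpose]
    _ = B * Bᵀ := by
      rw [transpose_mul, transpose_mul, transpose_mul, transpose_transpose, transpose_transpose, hAB]

def leverageScore (A : Matrix m n R) (i : m) : R :=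
  ∑ j, A i j ^ 2

theorem leverageScore_eq_mul_transpose_apply (A : Matrix m n R) (i : m) :
    leverageScore A i = (A * Aᵀ) i i := by
  simp [leverageScore, mul_apply, sq]

theorem leverageScore_eq_of_range_eq [Fintype m] [DecidableEq n] [DecidableEq l]
    {A : Matrix m n R} {B : Matrix m l R} (hA : Aᵀ * A = 1) (hB : Bᵀ * B = 1)
    (h : LinearMap.range A.mulVecLin = LinearMap.range B.mulVecLin) (i : m) :
    leverageScore A i = leverageScore B i := by
  rw [leverageScore_eq_mul_transpose_apply, leverageScore_eq_mul_transpose_apply,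
    mul_transpose_eq_of_range_eq hA hB h]

noncomputable def gramDetPoly [Fintype m] [DecidableEq l] (V : Matrix m l R) (n : Type*)
    [Fintype n] : MvPolynomial (m × n) R :=
  let A := Vᵀ.map (MvPolynomial.C : R →+* MvPolynomial (m × n) R) * mvPolynomialX m n R
  (A * Aᵀ).det

theorem eval_gramDetPoly [Fintype m] [DecidableEq l] (V : Matrix m l R) (M : Matrix m n R) :
    MvPolynomial.eval (fun p => M p.1 p.2) (gramDetPoly V n) = (Vᵀ * M * (Vᵀ * M)ᵀ).det := by
  have hA : (Vᵀ.map (MvPolynomial.C : R →+* MvPolynomial (m × n) R) * mvPolynomialX m n R).map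
      (MvPolynomial.eval fun p : m × n => M p.1 p.2) = Vᵀ * M := by
    rw [Matrix.map_mul, Matrix.map_map]
    congr 1
    · ext
      simp
    · exact mvPolynomialX_map_eval₂ (RingHom.id R) M
  rw [gramDetPoly, RingHom.map_det, RingHom.mapMatrix_apply, Matrix.map_mul, ← hA]
  simp only [transpose_map]

theorem gramDetPoly_ne_zero [Fintype m] [DecidableEq l] [DecidableEq n] [Nontrivial R]
    {V : Matrix m l R} (hV : Vᵀ * V = 1) (f : l ↪ n) : gramDetPoly V n ≠ 0 := by
  have hE : (1 : Matrix n n R).submatrix f id * ((1 : Matrix n n R).submatrix f id)ᵀ = 1 := by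
    rw [transpose_submatrix, transpose_one, ← submatrix_mul _ _ _ _ _ Function.bijective_id,
      Matrix.one_mul, submatrix_one_embedding]
  intro h
  have := eval_gramDetPoly V (V * (1 : Matrix n n R).submatrix f id)
  rw [h, map_zero, ← Matrix.mul_assoc, hV, Matrix.one_mul, hE, det_one] at this
  exact zero_ne_one this

end Matrix

namespace IsCompactSVD

variable {N d r : ℕ} {K : Matrix (Fin N) (Fin d) ℝ} {U : Matrix (Fin N) (Fin r) ℝ}
  {σ : Fin r → ℝ} {V : Matrix (Fin d) (Fin r) ℝ}

theorem range_mul_eq (h : IsCompactSVD K U σ V) {k : ℕ} {M : Matrix (Fin d) (Fin k) ℝ}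
    (hM : Function.Surjective (Vᵀ * M).mulVec) :
    LinearMap.range (K * M).mulVecLin = LinearMap.range U.mulVecLin := by
  have hσ : Function.Surjective (diagonal σ).mulVec :=
    mulVec_surjective_iff_isUnit.2 <| isUnit_diagonal.2 <|
      Pi.isUnit_iff.2 fun j => (h.2.2.2 j).ne'.isUnit
  rw [h.1, Matrix.mul_assoc _ Vᵀ M, range_mulVecLin_mul_of_surjective hM,
    range_mulVecLin_mul_of_surjective hσ]

theorem range_eq (h : IsCompactSVD K U σ V) :
    LinearMap.range K.mulVecLin = LinearMap.range U.mulVecLin := by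
  simpa using h.range_mul_eq (M := (1 : Matrix (Fin d) (Fin d) ℝ)) (by
    simpa using mulVec_surjective_iff_exists_right_inverse.2 ⟨V, h.2.2.1⟩)

theorem rank_eq (h : IsCompactSVD K U σ V) : K.rank = r := by
  rw [Matrix.rank, h.range_eq, ← Matrix.rank, ← rank_transpose_mul_self, h.2.1, rank_one,
    Fintype.card_fin]

end IsCompactSVD

theorem one_le_condNumSq {r : ℕ} [Nonempty (Fin r)] {σ : Fin r → ℝ} (hσ : ∀ j, 0 < σ j) :
    1 ≤ condNumSq σ := by
  have hne : (Set.range fun j => σ j ^ 2).Nonempty := Set.range_nonempty _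
  have hfin : (Set.range fun j => σ j ^ 2).Finite := Set.finite_range _
  obtain ⟨j, hj⟩ := hne.csInf_mem hfin
  rw [condNumSq, one_le_div (hj ▸ pow_pos (hσ j) 2)]
  exact csInf_le_csSup hne hfin.bddBelow hfin.bddAbove

theorem inv_mul_le_self_and_le_mul_self {κ ε x : ℝ} (hκ : 1 ≤ κ) (hε₀ : 0 ≤ ε) (hε₁ : ε < 1)
    (hx : 0 ≤ x) : κ⁻¹ * ((1 - ε) / (1 + ε)) * x ≤ x ∧ x ≤ κ * ((1 + ε) / (1 - ε)) * x := by
  have hlow : (1 - ε) / (1 + ε) ≤ 1 := (div_le_one (by linarith)).2 (by linarith)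
  have hhigh : 1 ≤ (1 + ε) / (1 - ε) := (one_le_div (by linarith)).2 (by linarith)
  constructor
  · exact mul_le_of_le_one_left hx <|
      mul_le_one₀ (inv_le_one_of_one_le₀ hκ) (div_nonneg (by linarith) (by linarith)) hlow
  · exact le_mul_of_one_le_left hx (one_le_mul_of_one_le_of_one_le hκ hhigh)

theorem leverageScore_condNumSq_bounds {N r : ℕ} (U : Matrix (Fin N) (Fin r) ℝ) {σ : Fin r → ℝ}
    (hσ : ∀ j, 0 < σ j) {ε : ℝ} (hε₀ : 0 ≤ ε) (hε₁ : ε < 1) (i : Fin N) :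
    (condNumSq σ)⁻¹ * ((1 - ε) / (1 + ε)) * leverageScore U i ≤ leverageScore U i ∧
      leverageScore U i ≤ condNumSq σ * ((1 + ε) / (1 - ε)) * leverageScore U i := by
  rcases isEmpty_or_nonempty (Fin r) with hr | hr
  · simp [leverageScore]
  · exact inv_mul_le_self_and_le_mul_self (one_le_condNumSq hσ) hε₀ hε₁
      (Finset.sum_nonneg fun j _ => sq_nonneg _)

theorem lt_of_sketch_size_bound {r k : ℕ} {ε δ : ℝ} (hε : ε ∈ Set.Ioo (0 : ℝ) 1)
    (hδ : δ ∈ Set.Ioo (0 : ℝ) 1)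
    (hk : 12 * ε⁻¹ ^ 2 * ((r : ℝ) * Real.log (42 / ε) + Real.log (2 / δ)) ≤ k) : r < k := by
  obtain ⟨hε₀, hε₁⟩ := hε
  obtain ⟨hδ₀, hδ₁⟩ := hδ
  have hinv : 1 ≤ ε⁻¹ ^ 2 := one_le_pow₀ ((one_le_inv₀ hε₀).2 hε₁.le)
  have hlog42 : 1 ≤ Real.log (42 / ε) := by
    rw [Real.le_log_iff_exp_le (by positivity)]
    have : (42 : ℝ) ≤ 42 / ε := (le_div_iff₀ hε₀).2 (by nlinarith)
    linarith [Real.exp_one_lt_d9]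
  have hlog2 : 0 < Real.log (2 / δ) := Real.log_pos ((lt_div_iff₀ hδ₀).2 (by linarith))
  have hrL : (r : ℝ) ≤ r * Real.log (42 / ε) := le_mul_of_one_le_right r.cast_nonneg hlog42
  set A := (r : ℝ) * Real.log (42 / ε) + Real.log (2 / δ)
  have hA : A ≤ 12 * ε⁻¹ ^ 2 * A := le_mul_of_one_le_left (by linarith) (by linarith)
  exact_mod_cast (show (r : ℝ) < k by linarith)

/-- **Approximate leverage scores via Gaussian right sketching.**  Let `K ∈ ℝ^{N×d}` with leverage
scores `ℓ i = ‖U i‖²` (for a compact SVD `K = U Σ Vᵀ`), and let `Φ ∈ ℝ^{d×k}` have i.i.d.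
`N(0, 1/k)` entries.  If `k ≥ 12 ε⁻² (rank(K) log(42/ε) + log(2/δ))` then, with probability at
least `1 − δ`, for every compact SVD `K Φ = Ũ Σ̃ Ṽᵀ` of the sketch and every row `i`,
`κ(K)⁻¹ · (1−ε)/(1+ε) · ℓ i ≤ ‖Ũ i‖² ≤ κ(K) · (1+ε)/(1−ε) · ℓ i`, where
`κ(K) = σ_max²/σ_min²` is the squared-singular-value condition number of `K`. -/
theorem approximate_leverage_scores
    {Ω : Type*} [MeasurableSpace Ω] (μ : Measure Ω) [IsProbabilityMeasure μ]
    (N d k : ℕ) (Φ : Ω → Matrix (Fin d) (Fin k) ℝ)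
    -- the entries of `Φ` are i.i.d. `N(0, 1/k)`
    (hindep : iIndepFun
      (fun (p : Fin d × Fin k) ω => Φ ω p.1 p.2) μ)
    (hlaw : ∀ p : Fin d × Fin k,
      μ.map (fun ω => Φ ω p.1 p.2) = gaussianReal 0 ((k : NNReal))⁻¹)
    (K : Matrix (Fin N) (Fin d) ℝ)
    (ε δ : ℝ) (hε : ε ∈ Set.Ioo (0 : ℝ) 1) (hδ : δ ∈ Set.Ioo (0 : ℝ) 1)
    -- a compact SVD of `K`, defining its leverage scores `ℓ i = ∑ j, (U i j)²`
    (r : ℕ) (U : Matrix (Fin N) (Fin r) ℝ) (σ : Fin r → ℝ) (V : Matrix (Fin d) (Fin r) ℝ)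
    (hsvd : IsCompactSVD K U σ V)
    (hk : 12 * ε⁻¹ ^ 2 * ((K.rank : ℝ) * Real.log (42 / ε) + Real.log (2 / δ)) ≤ (k : ℝ)) :
    ENNReal.ofReal (1 - δ) ≤
      μ {ω | ∀ (r' : ℕ) (U' : Matrix (Fin N) (Fin r') ℝ) (σ' : Fin r' → ℝ)
               (V' : Matrix (Fin k) (Fin r') ℝ),
             IsCompactSVD (K * Φ ω) U' σ' V' →
             ∀ i,
               (condNumSq σ)⁻¹ * ((1 - ε) / (1 + ε)) * (∑ j, (U i j) ^ 2) ≤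
                  ∑ j, (U' i j) ^ 2 ∧
               ∑ j, (U' i j) ^ 2 ≤
                  condNumSq σ * ((1 + ε) / (1 - ε)) * (∑ j, (U i j) ^ 2)} := by
  have hrk : r < k := lt_of_sketch_size_bound hε hδ (hsvd.rank_eq ▸ hk)
  have hatom (p : Fin d × Fin k) : NullSingletonClass (μ.map fun ω => Φ ω p.1 p.2) := by
    rw [hlaw p]
    exact nullSingletonClass_gaussianReal (inv_ne_zero (Nat.cast_ne_zero.2 (by omega)))
  have hsurj : ∀ᵐ ω ∂μ, Function.Surjective (Vᵀ * Φ ω).mulVec := by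
    filter_upwards [hindep.ae_eval_ne_zero
      (fun p => aemeasurable_of_map_neZero (by rw [hlaw p]; infer_instance))
      (gramDetPoly_ne_zero hsvd.2.2.1 (Fin.castLEEmb hrk.le))] with ω hω
    exact mulVec_surjective_of_det_mul_transpose_ne_zero (by rwa [eval_gramDetPoly] at hω)
  refine le_trans ?_ (measure_mono (s := {ω | Function.Surjective (Vᵀ * Φ ω).mulVec}) ?_)
  · have hnull : μ {ω | Function.Surjective (Vᵀ * Φ ω).mulVec}ᶜ = 0 := ae_iff.1 hsurj
    rw [measure_congr (ae_eq_univ.2 hnull), measure_univ]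
    exact ENNReal.ofReal_le_one.2 (by linarith [hδ.1])
  · intro ω hω r' U' σ' V' hsvd' i
    have hscore : leverageScore U' i = leverageScore U i :=
      leverageScore_eq_of_range_eq hsvd'.2.1 hsvd.2.1
        (hsvd'.range_eq.symm.trans (hsvd.range_mul_eq hω)) i
    change _ * leverageScore U i ≤ leverageScore U' i ∧ leverageScore U' i ≤ _ * leverageScore U i
    rw [hscore]
    exact leverageScore_condNumSq_bounds U hsvd.2.2.2 hε.1.le hε.2 i
end

section
/- Let K ∈ ℝ^{N×d} and K̂ ∈ ℝ^{N×k} be matrices of the same rank r, with compact singular value decompositions K = UΣVᵀ and K̂ = ŨΣ̃Ṽᵀ. Let m and M denote the minimum and maximum of the squared singular values of K, and m′ and M′ those of K̂. Suppose ε ∈ (0,1) and that: (i) for every row index i, (1 − ε)·‖K_i‖₂² ≤ ‖K̂_i‖₂² ≤ (1 + ε)·‖K_i‖₂²; and (ii) m′ ≥ (1 − ε)·m and M′ ≤ (1 + ε)·M. Then for every row index i: ((1 − ε)/(1 + ε)) · (m/M) · ‖U_i‖₂² ≤ ‖Ũ_i‖₂² ≤ ((1 + ε)/(1 − ε)) ·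 (M/m) · ‖U_i‖₂². -/
/-
Since `V` has orthonormal columns, `‖K_i‖² = ∑ₗ σₗ² U_{il}²`, so `m ‖U_i‖² ≤ ‖K_i‖² ≤ M ‖U_i‖²`,
and likewise `m' ‖Ũ_i‖² ≤ ‖K̂_i‖² ≤ M' ‖Ũ_i‖²`. Chaining these with the row-norm bounds and the
spectral bounds gives `(1-ε) m ‖U_i‖² ≤ (1+ε) M ‖Ũ_i‖²` and `(1-ε) m ‖Ũ_i‖² ≤ (1+ε) M ‖U_i‖²`.
-/

open Matrix

lemma iInf_mul_sum_le_sum_mul {ι : Type*} [Fintype ι] (f g : ι → ℝ) (hg : ∀ i, 0 ≤ g i) :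
    (⨅ i, f i) * ∑ i, g i ≤ ∑ i, f i * g i := by
  rw [Finset.mul_sum]
  exact Finset.sum_le_sum fun i _ =>
    mul_le_mul_of_nonneg_right (ciInf_le (Finite.bddBelow_range f) i) (hg i)

lemma sum_mul_le_iSup_mul_sum {ι : Type*} [Fintype ι] (f g : ι → ℝ) (hg : ∀ i, 0 ≤ g i) :
    ∑ i, f i * g i ≤ (⨆ i, f i) * ∑ i, g i := by
  rw [Finset.mul_sum]
  exact Finset.sum_le_sum fun i _ =>
    mul_le_mul_of_nonneg_right (le_ciSup (Finite.bddAbove_range f) i) (hg i)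

namespace IsCompactSVD

variable {N d r : ℕ} {K : Matrix (Fin N) (Fin d) ℝ} {U : Matrix (Fin N) (Fin r) ℝ}
  {σ : Fin r → ℝ} {V : Matrix (Fin d) (Fin r) ℝ}

lemma mul_transpose_self (h : IsCompactSVD K U σ V) :
    K * Kᵀ = U * (diagonal σ * diagonal σ) * Uᵀ := by
  obtain ⟨rfl, -, hV, -⟩ := h
  simp only [transpose_mul, transpose_transpose, diagonal_transpose, Matrix.mul_assoc]
  rw [← Matrix.mul_assoc Vᵀ, hV, Matrix.one_mul]

lemma sum_sq_row (h : IsCompactSVD K U σ V) (i : Fin N) :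
    ∑ j, K i j ^ 2 = ∑ l, σ l ^ 2 * U i l ^ 2 := by
  have hdiag : ∑ j, K i j ^ 2 = (K * Kᵀ) i i := by
    simp only [mul_apply, transpose_apply, sq]
  rw [hdiag, h.mul_transpose_self, diagonal_mul_diagonal, mul_apply]
  simp only [mul_diagonal, transpose_apply]
  exact Finset.sum_congr rfl fun l _ => by ring

lemma iInf_sq_mul_sum_sq_le (h : IsCompactSVD K U σ V) (i : Fin N) :
    (⨅ l, σ l ^ 2) * ∑ l, U i l ^ 2 ≤ ∑ j, K i j ^ 2 :=
  h.sum_sq_row i ▸ iInf_mul_sum_le_sum_mul _ _ fun _ => sq_nonneg _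

lemma sum_sq_le_iSup_sq_mul_sum_sq (h : IsCompactSVD K U σ V) (i : Fin N) :
    ∑ j, K i j ^ 2 ≤ (⨆ l, σ l ^ 2) * ∑ l, U i l ^ 2 :=
  h.sum_sq_row i ▸ sum_mul_le_iSup_mul_sum _ _ fun _ => sq_nonneg _

lemma iInf_sq_pos [Nonempty (Fin r)] (h : IsCompactSVD K U σ V) : 0 < ⨅ l, σ l ^ 2 := by
  obtain ⟨l, hl⟩ := exists_eq_ciInf_of_finite (f := fun l => σ l ^ 2)
  exact hl ▸ pow_pos (h.2.2.2 l) 2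

end IsCompactSVD

theorem leverage_score_comparison_general
    (N d k r : ℕ)
    (K : Matrix (Fin N) (Fin d) ℝ) (Khat : Matrix (Fin N) (Fin k) ℝ)
    (U : Matrix (Fin N) (Fin r) ℝ) (σ : Fin r → ℝ) (V : Matrix (Fin d) (Fin r) ℝ)
    (hK : IsCompactSVD K U σ V)
    (Ut : Matrix (Fin N) (Fin r) ℝ) (σt : Fin r → ℝ) (Vt : Matrix (Fin k) (Fin r) ℝ)
    (hKhat : IsCompactSVD Khat Ut σt Vt)
    (m M m' M' : ℝ)
    (hm : m = sInf (Set.range fun j => σ j ^ 2)) (hM : M = sSup (Set.range fun j => σ j ^ 2))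
    (hm' : m' = sInf (Set.range fun j => σt j ^ 2)) (hM' : M' = sSup (Set.range fun j => σt j ^ 2))
    (ε : ℝ) (hε : ε ∈ Set.Ioo (0 : ℝ) 1)
    -- (i) row-norm bounds
    (hrows : ∀ i, (1 - ε) * (∑ j, (K i j) ^ 2) ≤ ∑ j, (Khat i j) ^ 2 ∧
                  ∑ j, (Khat i j) ^ 2 ≤ (1 + ε) * (∑ j, (K i j) ^ 2))
    -- (ii) spectral bounds
    (hmm : (1 - ε) * m ≤ m') (hMM : M' ≤ (1 + ε) * M) :
    ∀ i, ((1 - ε) / (1 + ε)) * (m / M) * (∑ j, (U i j) ^ 2) ≤ ∑ j, (Ut i j) ^ 2 ∧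
         ∑ j, (Ut i j) ^ 2 ≤ ((1 + ε) / (1 - ε)) * (M / m) * (∑ j, (U i j) ^ 2) := by
  intro i
  rcases isEmpty_or_nonempty (Fin r) with hr | hr
  · simp -- for `r = 0` both `‖U_i‖²` and `‖Ũ_i‖²` are empty sums
  obtain ⟨hε0, hε1⟩ := hε
  have hm0 : 0 < m := hm ▸ hK.iInf_sq_pos
  have hM0 : 0 < M := hm0.trans_le <| hm ▸ hM ▸
    ciInf_le_ciSup (Finite.bddBelow_range _) (Finite.bddAbove_range _)
  have hUt : 0 ≤ ∑ j, Ut i j ^ 2 := Finset.sum_nonneg fun _ _ => sq_nonneg _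
  have lower : (1 - ε) * m * ∑ j, U i j ^ 2 ≤ (1 + ε) * M * ∑ j, Ut i j ^ 2 := calc
    (1 - ε) * m * ∑ j, U i j ^ 2 ≤ (1 - ε) * ∑ j, K i j ^ 2 := by
      rw [mul_assoc]
      exact mul_le_mul_of_nonneg_left (hm ▸ hK.iInf_sq_mul_sum_sq_le i) (by linarith)
    _ ≤ ∑ j, Khat i j ^ 2 := (hrows i).1
    _ ≤ M' * ∑ j, Ut i j ^ 2 := hM' ▸ hKhat.sum_sq_le_iSup_sq_mul_sum_sq i
    _ ≤ (1 + ε) * M * ∑ j, Ut i j ^ 2 := by gcongr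
  have upper : (1 - ε) * m * ∑ j, Ut i j ^ 2 ≤ (1 + ε) * M * ∑ j, U i j ^ 2 := calc
    (1 - ε) * m * ∑ j, Ut i j ^ 2 ≤ m' * ∑ j, Ut i j ^ 2 := by gcongr
    _ ≤ ∑ j, Khat i j ^ 2 := hm' ▸ hKhat.iInf_sq_mul_sum_sq_le i
    _ ≤ (1 + ε) * ∑ j, K i j ^ 2 := (hrows i).2
    _ ≤ (1 + ε) * M * ∑ j, U i j ^ 2 := by
      rw [mul_assoc]
      exact mul_le_mul_of_nonneg_left (hM ▸ hK.sum_sq_le_iSup_sq_mul_sum_sq i) (by linarith)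
  constructor
  · rw [div_mul_div_comm, div_mul_eq_mul_div, div_le_iff₀ (by positivity)]
    linarith
  · rw [div_mul_div_comm, div_mul_eq_mul_div, le_div_iff₀ (by positivity)]
    linarith

/-- **Row-wise leverage comparison from spectral and row-norm bounds.**  Let `K ∈ ℝ^{N×d}` and
`K̂ ∈ ℝ^{N×k}` have the same rank `r`, with compact SVDs `K = U Σ Vᵀ` and `K̂ = Ũ Σ̃ Ṽᵀ`.
Writing `m, M` (resp. `m', M'`) for the min and max squared singular values of `K` (resp. `K̂`),
if every row satisfies `(1−ε)‖K_i‖² ≤ ‖K̂_i‖² ≤ (1+ε)‖K_i‖²` and moreover `m' ≥ (1−ε) m` and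
`M' ≤ (1+ε) M`, then for every row `i`,
`((1−ε)/(1+ε))·(m/M)·‖U_i‖² ≤ ‖Ũ_i‖² ≤ ((1+ε)/(1−ε))·(M/m)·‖U_i‖²`. -/
theorem leverage_score_comparison
    (N d k r : ℕ)
    (K : Matrix (Fin N) (Fin d) ℝ) (Khat : Matrix (Fin N) (Fin k) ℝ)
    (hrK : K.rank = r) (hrKhat : Khat.rank = r)
    (U : Matrix (Fin N) (Fin r) ℝ) (σ : Fin r → ℝ) (V : Matrix (Fin d) (Fin r) ℝ)
    (hK : IsCompactSVD K U σ V)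
    (Ut : Matrix (Fin N) (Fin r) ℝ) (σt : Fin r → ℝ) (Vt : Matrix (Fin k) (Fin r) ℝ)
    (hKhat : IsCompactSVD Khat Ut σt Vt)
    (m M m' M' : ℝ)
    (hm : m = sInf (Set.range fun j => σ j ^ 2)) (hM : M = sSup (Set.range fun j => σ j ^ 2))
    (hm' : m' = sInf (Set.range fun j => σt j ^ 2)) (hM' : M' = sSup (Set.range fun j => σt j ^ 2))
    (ε : ℝ) (hε : ε ∈ Set.Ioo (0 : ℝ) 1)
    -- (i) row-norm bounds
    (hrows : ∀ i, (1 - ε) * (∑ j, (K i j) ^ 2) ≤ ∑ j, (Khat i j) ^ 2 ∧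
                  ∑ j, (Khat i j) ^ 2 ≤ (1 + ε) * (∑ j, (K i j) ^ 2))
    -- (ii) spectral bounds
    (hmm : (1 - ε) * m ≤ m') (hMM : M' ≤ (1 + ε) * M) :
    ∀ i, ((1 - ε) / (1 + ε)) * (m / M) * (∑ j, (U i j) ^ 2) ≤ ∑ j, (Ut i j) ^ 2 ∧
         ∑ j, (Ut i j) ^ 2 ≤ ((1 + ε) / (1 - ε)) * (M / m) * (∑ j, (U i j) ^ 2) :=
  leverage_score_comparison_general N d k r K Khat U σ V hK Ut σt Vt hKhat m M m' M' hm hM hm' hM' ε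
    hε hrows hmm hMM
end
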